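/- If an element γ of GL₂(ℤ) has finite order and possesses a non-zero fixed vector in ℤ², then γ² = 1. -/

import Mathlib

/-!
A fixed vector gives `det (γ - 1) = 0`, i.e. `1 - tr γ + det γ = 0` with `det γ = ±1`.
If `det γ = -1` then `tr γ = 0` and Cayley–Hamilton gives `γ² = 1`. If `det γ = 1` then
`tr γ = 2`, so `γ - 1` squares to zero and `γⁿ = 1 + n (γ - 1)`; finite order then forces
`γ = 1`.
-/

namespace Matrix

instance {m n α : Type*} [AddMonoid α] [IsAddTorsionFree α] : IsAddTorsionFree (Matrix m n α) :=
  inferInstanceAs (IsAddTorsionFree (m → n → α))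

variable {R : Type*} [CommRing R] {A : Matrix (Fin 2) (Fin 2) R}

variable (A) in
lemma det_sub_one_fin_two : (A - 1).det = A.det - A.trace + 1 := by
  simp [det_fin_two, trace_fin_two]
  ring

variable (A) in
lemma sq_eq_trace_smul_sub_det_smul_fin_two : A ^ 2 = A.trace • A - A.det • 1 := by
  nontriviality R
  have h := A.aeval_self_charpoly
  rw [charpoly_fin_two] at h
  simp only [map_add, map_sub, map_pow, map_mul, Polynomial.aeval_X, Polynomial.aeval_C,
    Algebra.algebraMap_eq_smul_one, smul_mul_assoc, one_mul] at h
  rw [← sub_eq_zero, ← h]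
  abel

lemma sq_eq_one_of_det_sub_one_eq_zero_of_det_eq_neg_one (hA : (A - 1).det = 0)
    (hdet : A.det = -1) : A ^ 2 = 1 := by
  have htr : A.trace = 0 := by
    rw [det_sub_one_fin_two, hdet] at hA
    linear_combination -hA
  rw [sq_eq_trace_smul_sub_det_smul_fin_two, htr, hdet, zero_smul, zero_sub, neg_smul, one_smul,
    neg_neg]

lemma sub_one_sq_eq_zero_of_det_sub_one_eq_zero_of_det_eq_one (hA : (A - 1).det = 0)
    (hdet : A.det = 1) : (A - 1) ^ 2 = 0 := by
  have htr : A.trace = 2 := by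
    rw [det_sub_one_fin_two, hdet] at hA
    linear_combination -hA
  rw [show (A - 1) ^ 2 = A ^ 2 - 2 • A + 1 by noncomm_ring,
    sq_eq_trace_smul_sub_det_smul_fin_two, htr, hdet]
  module

end Matrix

lemma one_add_pow_of_sq_eq_zero {R : Type*} [Ring R] {N : R} (hN : N ^ 2 = 0) (n : ℕ) :
    (1 + N) ^ n = 1 + n • N := by
  induction n with
  | zero => simp
  | succ n ih =>
    rw [pow_succ, ih, add_mul, one_mul, mul_add, mul_one, smul_mul_assoc, ← sq, hN, smul_zero,
      add_zero, succ_nsmul]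
    abel

lemma IsOfFinOrder.eq_one_of_sub_one_sq_eq_zero {R : Type*} [Ring R] [IsAddTorsionFree R]
    {a : R} (ha : IsOfFinOrder a) (h : (a - 1) ^ 2 = 0) : a = 1 := by
  obtain ⟨n, hn, han⟩ := isOfFinOrder_iff_pow_eq_one.mp ha
  rw [← add_sub_cancel 1 a, one_add_pow_of_sq_eq_zero h, add_eq_left, nsmul_eq_zero_iff] at han
  exact sub_eq_zero.mp (han.resolve_right hn.ne')

/-- A finite-order element of `GL₂(ℤ)` with a non-zero fixed vector in `ℤ²` squares to `1`. -/
theorem stmt3 (γ : Matrix.GeneralLinearGroup (Fin 2) ℤ) (h : IsOfFinOrder γ)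
    (hv : ∃ v : Fin 2 → ℤ, v ≠ 0 ∧ (γ : Matrix (Fin 2) (Fin 2) ℤ).mulVec v = v) :
    γ ^ 2 = 1 := by
  obtain ⟨v, hv0, hfix⟩ := hv
  have hfixed : ((γ : Matrix (Fin 2) (Fin 2) ℤ) - 1).det = 0 :=
    Matrix.exists_mulVec_eq_zero_iff.mp ⟨v, hv0, by
      rw [Matrix.sub_mulVec, hfix, Matrix.one_mulVec, sub_self]⟩
  ext1
  rw [Units.val_pow_eq_pow_val]
  rcases Int.isUnit_iff.mp (Matrix.isUnits_det_units γ) with hdet | hdet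
  · have hγ := (Units.isOfFinOrder_val.mpr h).eq_one_of_sub_one_sq_eq_zero
      (Matrix.sub_one_sq_eq_zero_of_det_sub_one_eq_zero_of_det_eq_one hfixed hdet)
    rw [hγ, one_pow, Units.val_one]
  · exact Matrix.sq_eq_one_of_det_sub_one_eq_zero_of_det_eq_neg_one hfixed hdet
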